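/- In a cons-free ATRS, let Y be the set of constructor symbols whose type has order greater than 1, F' = F \ Y, and R' the rules of R not mentioning any symbol of Y. Then (a) all data terms and all B-safe terms lie in T(F', ∅); (b) if s is a basic term and s →*_R t, then t ∈ T(F', ∅) and s →*_{R'} t. -/

import Mathlib

/-! # Applicative term rewriting systems (ATRSs) -/

/-- Simple types over a countable set of sorts. -/
inductive Ty where
  | base : ℕ → Ty
  | arrow : Ty → Ty → Ty

/-- Type order: sorts have order 0, `σ ⇒ τ` has order `max (order σ + 1) (order τ)`. -/
def Ty.order : Ty → ℕ
  | .base _ => 0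
  | .arrow σ τ => max (σ.order + 1) τ.order

/-- Applicative terms over a set `α` of function symbols, with variables `ℕ`. -/
inductive Tm (α : Type) where
  | sym : α → Tm α
  | var : ℕ → Tm α
  | app : Tm α → Tm α → Tm α

mutual
  /-- Strict subterm: `t` is a strict subterm of `s₁ s₂` if it is a strict
  subterm of `s₁` or a subterm of `s₂` (heads of applications are not subterms). -/
  inductive StrSubtm {α : Type} : Tm α → Tm α → Prop where
    | left {t s u : Tm α} : StrSubtm t s → StrSubtm t (Tm.app s u)
    | right {t s u : Tm α} : Subtm t u → StrSubtm t (Tm.app s u)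
  /-- Subterm: `t ⊴ s` iff `t = s` or `t` is a strict subterm of `s`. -/
  inductive Subtm {α : Type} : Tm α → Tm α → Prop where
    | refl (s : Tm α) : Subtm s s
    | strict {t s : Tm α} : StrSubtm t s → Subtm t s
end

/-- A signature: which symbols are constructors, their types, and variable types. -/
structure Sig (α : Type) where
  Cons : α → Prop
  typeOf : α → Ty
  varTy : ℕ → Ty

/-- Typing judgement for applicative terms. -/
inductive HasTy {α : Type} (S : Sig α) : Tm α → Ty → Prop where
  | sym (f : α) : HasTy S (.sym f) (S.typeOf f)
  | var (x : ℕ) : HasTy S (.var x) (S.varTy x)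
  | app {s t : Tm α} {σ τ : Ty} :
      HasTy S s (.arrow σ τ) → HasTy S t σ → HasTy S (.app s t) τ

mutual
  /-- Patterns: a variable, or a constructor fully applied (to base type) to patterns. -/
  inductive Pat {α : Type} (S : Sig α) : Tm α → Prop where
    | var (x : ℕ) : Pat S (.var x)
    | cons {s : Tm α} : PatSpine S s → (∃ i, HasTy S s (.base i)) → Pat S s
  /-- A constructor applied to a (possibly incomplete) list of patterns. -/
  inductive PatSpine {α : Type} (S : Sig α) : Tm α → Prop where
    | head {f : α} : S.Cons f → PatSpine S (.sym f)
    | app {s t : Tm α} : PatSpine S s → Pat S t → PatSpine S (.app s t)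
end

/-- Ground terms: terms without variables. -/
def Tm.ground {α : Type} : Tm α → Prop
  | .sym _ => True
  | .var _ => False
  | .app s t => s.ground ∧ t.ground

/-- Data terms: ground patterns. -/
def IsData {α : Type} (S : Sig α) (s : Tm α) : Prop := Pat S s ∧ s.ground

/-- The set of variables of a term. -/
def Tm.vars {α : Type} : Tm α → Set ℕ
  | .sym _ => ∅
  | .var x => {x}
  | .app s t => s.vars ∪ t.vars

/-- Number of occurrences of variable `x` in a term. -/
def Tm.count {α : Type} (x : ℕ) : Tm α → ℕ
  | .sym _ => 0
  | .var y => if y = x then 1 else 0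
  | .app s t => Tm.count x s + Tm.count x t

/-- Applying a substitution to a term. -/
def subst {α : Type} (γ : ℕ → Tm α) : Tm α → Tm α
  | .sym f => .sym f
  | .var x => γ x
  | .app s t => .app (subst γ s) (subst γ t)

/-- A rewrite rule. -/
structure Rule (α : Type) where
  lhs : Tm α
  rhs : Tm α

/-- Left-hand side shape of a constructor rule:
a defined symbol applied to patterns. -/
inductive LhsSpine {α : Type} (S : Sig α) : Tm α → Prop where
  | head {f : α} : ¬ S.Cons f → LhsSpine S (.sym f)
  | app {s t : Tm α} : LhsSpine S s → Pat S t → LhsSpine S (.app s t)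

/-- The head symbol of a term, if any. -/
def Tm.headSym {α : Type} : Tm α → Option α
  | .sym f => some f
  | .var _ => none
  | .app s _ => s.headSym

/-- `t` has the form `c t₁ ⋯ t_m` with `c` a constructor. -/
def ConsHead {α : Type} (S : Sig α) (t : Tm α) : Prop :=
  ∃ f, t.headSym = some f ∧ S.Cons f

/-- A rule is cons-free if every constructor-headed subterm of the right-hand side
is a data term or a (strict) subterm of the left-hand side. -/
def ConsFreeRule {α : Type} (S : Sig α) (ρ : Rule α) : Prop :=
  ∀ t, Subtm t ρ.rhs → ConsHead S t → (IsData S t ∨ StrSubtm t ρ.lhs)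

/-- A left-linear cons-free constructor rule (with well-typed sides of equal type,
and variables of the right-hand side occurring on the left). -/
def GoodRule {α : Type} (S : Sig α) (ρ : Rule α) : Prop :=
  LhsSpine S ρ.lhs ∧
  (∀ x, Tm.count x ρ.lhs ≤ 1) ∧
  ρ.rhs.vars ⊆ ρ.lhs.vars ∧
  (∃ σ, HasTy S ρ.lhs σ ∧ HasTy S ρ.rhs σ) ∧
  ConsFreeRule S ρ

/-- One-step rewriting: closure of rule instances under application contexts. -/
inductive Rew {α : Type} (R : Set (Rule α)) : Tm α → Tm α → Prop where
  | root {ρ : Rule α} {γ : ℕ → Tm α} :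
      ρ ∈ R → Rew R (subst γ ρ.lhs) (subst γ ρ.rhs)
  | appL {s s' t : Tm α} : Rew R s s' → Rew R (.app s t) (.app s' t)
  | appR {s t t' : Tm α} : Rew R t t' → Rew R (.app s t) (.app s t')

/-- `s` is `B`-safe: every constructor-headed subterm of `s` lies in `B`. -/
def BSafe {α : Type} (S : Sig α) (B : Set (Tm α)) (s : Tm α) : Prop :=
  ∀ t, Subtm t s → ConsHead S t → t ∈ B

/-- `B` is a suitable set of data terms: it consists of data terms, is closed
under subterms, and contains all data subterms of right-hand sides of rules. -/
def GoodB {α : Type} (S : Sig α) (R : Set (Rule α)) (B : Set (Tm α)) : Prop :=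
  (∀ t ∈ B, IsData S t) ∧
  (∀ t ∈ B, ∀ u, Subtm u t → u ∈ B) ∧
  (∀ ρ ∈ R, ∀ t, Subtm t ρ.rhs → IsData S t → t ∈ B)

/-- Spine of a basic term: a defined symbol applied to data terms. -/
inductive BasicSpine {α : Type} (S : Sig α) : Tm α → Prop where
  | head {f : α} : ¬ S.Cons f → BasicSpine S (.sym f)
  | app {s t : Tm α} : BasicSpine S s → IsData S t → BasicSpine S (.app s t)

/-- Basic terms: a defined symbol applied to data terms, of base type. -/
def Basic {α : Type} (S : Sig α) (s : Tm α) : Prop :=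
  BasicSpine S s ∧ ∃ i, HasTy S s (.base i)

/-- The set `B_s`: data terms occurring in `s` or in a right-hand side of a rule. -/
def Bset {α : Type} (S : Sig α) (R : Set (Rule α)) (s : Tm α) : Set (Tm α) :=
  { t | IsData S t ∧ (Subtm t s ∨ ∃ ρ ∈ R, Subtm t ρ.rhs) }

/-- A symbol occurs (possibly as head) in a term. -/
def Tm.hasSym {α : Type} (f : α) : Tm α → Prop
  | .sym g => g = f
  | .var _ => False
  | .app s t => Tm.hasSym f s ∨ Tm.hasSym f t

/-- `f ∈ Y`: a constructor whose type has order greater than 1. -/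
def InY {α : Type} (S : Sig α) (f : α) : Prop :=
  S.Cons f ∧ 1 < (S.typeOf f).order

/-- A term over the restricted signature `F' = F \ Y`. -/
def YFree {α : Type} (S : Sig α) (s : Tm α) : Prop :=
  ∀ f, Tm.hasSym f s → ¬ InY S f

/-- The restricted rule set `R'`: rules mentioning no symbol of `Y` on either side. -/
def Rprime {α : Type} (S : Sig α) (R : Set (Rule α)) : Set (Rule α) :=
  { ρ ∈ R | YFree S ρ.lhs ∧ YFree S ρ.rhs }

/-!
A data term is a constructor applied to data terms, all of base type, so every constructor in
it has a type of order at most 1. Hence data terms avoid `Y`, and so do ground `B`-safe terms: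
their constructor-headed subterms are data and all other symbols are defined.

Starting from a basic term `s`, every reduct stays ground, well typed and `B_s`-safe. At a root
step, a constructor-headed subterm of the contractum is either an instance of a data term or of
a strict subterm of the left-hand side, or lies inside the substitution; a substituted variable
cannot be applied, since a constructor-headed value of it is data and has base type. Finally, a
rule whose left-hand side has a `Y`-free instance is itself `Y`-free on the left, and by
cons-freeness also on the right, so every step uses a rule of `R'`.
-/

section

variable {α : Type} {S : Sig α}

section Subterms

mutual
theorem Subtm.trans {a b c : Tm α} : Subtm a b → Subtm b c → Subtm a c
  | h, .refl _ => h
  | h, .strict h' => .strict (h.trans_strSubtm h')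

theorem Subtm.trans_strSubtm {a b c : Tm α} : Subtm a b → StrSubtm b c → StrSubtm a c
  | h, .left h' => .left (h.trans_strSubtm h')
  | h, .right h' => .right (h.trans h')
end

mutual
theorem Subtm.vars_subset {s t : Tm α} : Subtm t s → t.vars ⊆ s.vars
  | .refl _ => subset_rfl
  | .strict h => h.vars_subset

theorem StrSubtm.vars_subset {s t : Tm α} : StrSubtm t s → t.vars ⊆ s.vars
  | .left h => h.vars_subset.trans Set.subset_union_left
  | .right h => h.vars_subset.trans Set.subset_union_right
end

mutual
theorem Subtm.hasSym {f : α} {s t : Tm α} : Subtm t s → t.hasSym f → s.hasSym f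
  | .refl _, hf => hf
  | .strict h, hf => h.hasSym hf

theorem StrSubtm.hasSym {f : α} {s t : Tm α} : StrSubtm t s → t.hasSym f → s.hasSym f
  | .left h, hf => Or.inl (h.hasSym hf)
  | .right h, hf => Or.inr (h.hasSym hf)
end

theorem Tm.hasSym_of_headSym {f : α} : ∀ {s : Tm α}, s.headSym = some f → s.hasSym f
  | .sym _, h => Option.some.inj h
  | .app _ _, h => Or.inl (Tm.hasSym_of_headSym h)

theorem Tm.exists_subtm_headSym_of_hasSym {f : α} :
    ∀ {s : Tm α}, s.hasSym f → ∃ t, Subtm t s ∧ t.headSym = some f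
  | .sym _, h => ⟨_, .refl _, congrArg some h⟩
  | .app a b, .inl h => by
    obtain ⟨t, ht | ht, hf⟩ := Tm.exists_subtm_headSym_of_hasSym h
    · exact ⟨.app a b, .refl _, hf⟩
    · exact ⟨t, .strict (.left ht), hf⟩
  | .app _ _, .inr h =>
    have ⟨t, ht, hf⟩ := Tm.exists_subtm_headSym_of_hasSym h
    ⟨t, .strict (.right ht), hf⟩

end Subterms

section Substitution

variable {γ : ℕ → Tm α}

theorem Tm.subst_eq_self_of_ground : ∀ {r : Tm α}, r.ground → subst γ r = r
  | .sym _, _ => rfl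
  | .app _ _, h => congrArg₂ Tm.app (Tm.subst_eq_self_of_ground h.1)
      (Tm.subst_eq_self_of_ground h.2)

theorem Tm.ground_subst : ∀ {r : Tm α}, (∀ x ∈ r.vars, (γ x).ground) → (subst γ r).ground
  | .sym _, _ => trivial
  | .var _, h => h _ rfl
  | .app _ _, h => ⟨Tm.ground_subst fun x hx => h x (.inl hx),
      Tm.ground_subst fun x hx => h x (.inr hx)⟩

theorem Tm.ground_of_ground_subst :
    ∀ {l : Tm α}, (subst γ l).ground → ∀ x ∈ l.vars, (γ x).ground
  | .var _, h, _, rfl => h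
  | .app _ _, h, x, .inl hx => Tm.ground_of_ground_subst h.1 x hx
  | .app _ _, h, x, .inr hx => Tm.ground_of_ground_subst h.2 x hx

theorem Tm.headSym_subst {f : α} : ∀ {l : Tm α}, l.headSym = some f →
    (subst γ l).headSym = some f
  | .sym _, h => h
  | .app a _, h => Tm.headSym_subst (l := a) h

theorem Tm.hasSym_subst {f : α} : ∀ {l : Tm α}, l.hasSym f → (subst γ l).hasSym f
  | .sym _, h => h
  | .app _ _, .inl h => .inl (Tm.hasSym_subst h)
  | .app _ _, .inr h => .inr (Tm.hasSym_subst h)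

mutual
theorem Subtm.apply_subst {s t : Tm α} : Subtm t s → Subtm (subst γ t) (subst γ s)
  | .refl _ => .refl _
  | .strict h => .strict h.apply_subst

theorem StrSubtm.apply_subst {s t : Tm α} : StrSubtm t s → StrSubtm (subst γ t) (subst γ s)
  | .left h => .left h.apply_subst
  | .right h => .right h.apply_subst
end

theorem strSubtm_subst_cases : ∀ {r u : Tm α}, StrSubtm u (subst γ r) →
    (∃ x ∈ r.vars, Subtm u (γ x)) ∨ ∃ r', StrSubtm r' r ∧ u = subst γ r'
  | .var x, _, h => .inl ⟨x, rfl, .strict h⟩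
  | .app _ _, _, .left h => (strSubtm_subst_cases h).imp
      (fun ⟨x, hx, hu⟩ => ⟨x, .inl hx, hu⟩) (fun ⟨r', hr', hu⟩ => ⟨r', .left hr', hu⟩)
  | .app _ b, _, .right (.refl _) => .inr ⟨b, .right (.refl b), rfl⟩
  | .app _ _, _, .right (.strict h) => (strSubtm_subst_cases h).imp
      (fun ⟨x, hx, hu⟩ => ⟨x, .inr hx, hu⟩) (fun ⟨r', hr', hu⟩ => ⟨r', .right (.strict hr'), hu⟩)

theorem subtm_subst_cases {r u : Tm α} : Subtm u (subst γ r) →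
    (∃ x ∈ r.vars, Subtm u (γ x)) ∨ ∃ r', Subtm r' r ∧ u = subst γ r' := by
  rintro (_ | h)
  · exact .inr ⟨r, .refl r, rfl⟩
  · exact (strSubtm_subst_cases h).imp id fun ⟨r', hr', hu⟩ => ⟨r', .strict hr', hu⟩

mutual
theorem Pat.subtm_subst_of_mem_vars {p u : Tm α} {x : ℕ} :
    Pat S p → x ∈ p.vars → Subtm u (γ x) → Subtm u (subst γ p)
  | .var _, rfl, hu => hu
  | .cons hs _, hx, hu => .strict (hs.strSubtm_subst_of_mem_vars hx hu)

theorem PatSpine.strSubtm_subst_of_mem_vars {p u : Tm α} {x : ℕ} :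
    PatSpine S p → x ∈ p.vars → Subtm u (γ x) → StrSubtm u (subst γ p)
  | .app hs _, .inl hx, hu => .left (hs.strSubtm_subst_of_mem_vars hx hu)
  | .app _ hp, .inr hx, hu => .right (hp.subtm_subst_of_mem_vars hx hu)
end

theorem LhsSpine.strSubtm_subst_of_mem_vars {l u : Tm α} {x : ℕ} :
    LhsSpine S l → x ∈ l.vars → Subtm u (γ x) → StrSubtm u (subst γ l)
  | .app hs _, .inl hx, hu => .left (hs.strSubtm_subst_of_mem_vars hx hu)
  | .app _ hp, .inr hx, hu => .right (hp.subtm_subst_of_mem_vars hx hu)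

end Substitution

section Typing

variable {γ : ℕ → Tm α}

theorem HasTy.unique {s : Tm α} {σ τ : Ty} : HasTy S s σ → HasTy S s τ → σ = τ
  | .sym _, .sym _ => rfl
  | .var _, .var _ => rfl
  | .app h₁ _, .app h₂ _ => by cases h₁.unique h₂; rfl

theorem HasTy.apply_subst {r : Tm α} {τ : Ty} :
    HasTy S r τ → (∀ x ∈ r.vars, HasTy S (γ x) (S.varTy x)) → HasTy S (subst γ r) τ
  | .sym f, _ => .sym f
  | .var x, hγ => hγ x rfl
  | .app h₁ h₂, hγ => .app (h₁.apply_subst fun x hx => hγ x (.inl hx))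
      (h₂.apply_subst fun x hx => hγ x (.inr hx))

mutual
theorem PatSpine.hasTy_subst_inv {p : Tm α} {σ τ : Ty} : PatSpine S p → HasTy S p σ →
    HasTy S (subst γ p) τ → σ = τ ∧ ∀ x ∈ p.vars, HasTy S (γ x) (S.varTy x)
  | .head _, .sym _, .sym _ => ⟨rfl, fun _ hx => absurd hx (Set.notMem_empty _)⟩
  | .app hs hp, .app h₁ h₂, .app h₁' h₂' => by
    obtain ⟨heq, ha⟩ := hs.hasTy_subst_inv h₁ h₁'
    cases heq
    have hb := hp.varTy_of_hasTy_subst h₂ h₂'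
    exact ⟨rfl, fun x hx => hx.elim (ha x) (hb x)⟩

theorem Pat.varTy_of_hasTy_subst {p : Tm α} {σ : Ty} : Pat S p → HasTy S p σ →
    HasTy S (subst γ p) σ → ∀ x ∈ p.vars, HasTy S (γ x) (S.varTy x)
  | .var _, .var _, h, _, rfl => h
  | .cons hs _, h, h', x, hx => (hs.hasTy_subst_inv h h').2 x hx
end

theorem LhsSpine.hasTy_subst_inv {l : Tm α} {σ τ : Ty} : LhsSpine S l → HasTy S l σ →
    HasTy S (subst γ l) τ → σ = τ ∧ ∀ x ∈ l.vars, HasTy S (γ x) (S.varTy x)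
  | .head _, .sym _, .sym _ => ⟨rfl, fun _ hx => absurd hx (Set.notMem_empty _)⟩
  | .app hs hp, .app h₁ h₂, .app h₁' h₂' => by
    obtain ⟨heq, ha⟩ := hs.hasTy_subst_inv h₁ h₁'
    cases heq
    have hb := hp.varTy_of_hasTy_subst h₂ h₂'
    exact ⟨rfl, fun x hx => hx.elim (ha x) (hb x)⟩

theorem GoodRule.hasTy_subst_rhs {ρ : Rule α} {σ : Ty} (hρ : GoodRule S ρ)
    (h : HasTy S (subst γ ρ.lhs) σ) : HasTy S (subst γ ρ.rhs) σ := by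
  obtain ⟨hl, -, hvars, ⟨τ, hlτ, hrτ⟩, -⟩ := hρ
  obtain ⟨rfl, hγ⟩ := hl.hasTy_subst_inv hlτ h
  exact hrτ.apply_subst fun x hx => hγ x (hvars hx)

mutual
theorem Subtm.exists_hasTy {s u : Tm α} {σ : Ty} : Subtm u s → HasTy S s σ → ∃ τ, HasTy S u τ
  | .refl _, h => ⟨σ, h⟩
  | .strict hu, h => hu.exists_hasTy h

theorem StrSubtm.exists_hasTy {s u : Tm α} {σ : Ty} :
    StrSubtm u s → HasTy S s σ → ∃ τ, HasTy S u τ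
  | .left hu, .app h _ => hu.exists_hasTy h
  | .right hu, .app _ h => hu.exists_hasTy h
end

def Tm.headVar : Tm α → Option ℕ
  | .sym _ => none
  | .var x => some x
  | .app s _ => s.headVar

theorem Tm.headSym_or_headVar : ∀ s : Tm α, (∃ f, s.headSym = some f) ∨ ∃ x, s.headVar = some x
  | .sym f => .inl ⟨f, rfl⟩
  | .var x => .inr ⟨x, rfl⟩
  | .app s _ => s.headSym_or_headVar

theorem Tm.mem_vars_of_headVar {x : ℕ} : ∀ {s : Tm α}, s.headVar = some x → x ∈ s.vars
  | .var _, h => (Option.some.inj h).symm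
  | .app _ _, h => .inl (Tm.mem_vars_of_headVar h)

theorem Tm.headSym_subst_of_headVar {x : ℕ} : ∀ {s : Tm α}, s.headVar = some x →
    (subst γ s).headSym = (γ x).headSym
  | .var _, h => by cases h; rfl
  | .app s _, h => Tm.headSym_subst_of_headVar (s := s) h

theorem Tm.eq_var_of_headVar_of_base {x i : ℕ} {τ : Ty} : ∀ {s : Tm α}, s.headVar = some x →
    HasTy S (γ x) (.base i) → HasTy S (subst γ s) τ → s = .var x
  | .var _, h, _, _ => by cases h; rfl
  | .app s _, h, hx, .app hs _ => by
    cases Tm.eq_var_of_headVar_of_base (s := s) h hx hs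
    cases hs.unique hx

end Typing

section Data

theorem IsData.exists_base {s : Tm α} : IsData S s → ∃ i, HasTy S s (.base i)
  | ⟨.cons _ h, _⟩ => h

mutual
theorem Pat.isData_of_strSubtm {t u : Tm α} : Pat S t → t.ground → StrSubtm u t → IsData S u
  | .cons hs _, hg, hu => hs.isData_of_strSubtm hg hu

theorem PatSpine.isData_of_strSubtm {t u : Tm α} :
    PatSpine S t → t.ground → StrSubtm u t → IsData S u
  | .app hs _, hg, .left hu => hs.isData_of_strSubtm hg.1 hu
  | .app _ hp, hg, .right (.refl _) => ⟨hp, hg.2⟩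
  | .app _ hp, hg, .right (.strict hu) => hp.isData_of_strSubtm hg.2 hu
end

theorem IsData.of_subtm {t u : Tm α} (h : IsData S t) : Subtm u t → IsData S u
  | .refl _ => h
  | .strict hu => h.1.isData_of_strSubtm h.2 hu

mutual
theorem Pat.cons_of_hasSym {t : Tm α} {f : α} : Pat S t → t.ground → t.hasSym f → S.Cons f
  | .cons hs _, hg, hf => hs.cons_of_hasSym hg hf

theorem PatSpine.cons_of_hasSym {t : Tm α} {f : α} :
    PatSpine S t → t.ground → t.hasSym f → S.Cons f
  | .head hc, _, rfl => hc
  | .app hs _, hg, .inl hf => hs.cons_of_hasSym hg.1 hf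
  | .app _ hp, hg, .inr hf => hp.cons_of_hasSym hg.2 hf
end

theorem IsData.cons_of_hasSym {t : Tm α} {f : α} (h : IsData S t) : t.hasSym f → S.Cons f :=
  h.1.cons_of_hasSym h.2

mutual
theorem Pat.yFree {t : Tm α} : Pat S t → t.ground → YFree S t
  | .cons hs ⟨_, h⟩, hg => hs.yFree hg h (Nat.zero_le 1)

theorem PatSpine.yFree {t : Tm α} {σ : Ty} :
    PatSpine S t → t.ground → HasTy S t σ → σ.order ≤ 1 → YFree S t
  | .head _, _, .sym _, hσ, _, rfl, hY => absurd hY.2 (not_lt.2 hσ)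
  | .app hs hp, hg, .app ha hb, hσ, f, hf, hY => by
    obtain ⟨j, hj⟩ := IsData.exists_base ⟨hp, hg.2⟩
    cases hb.unique hj
    refine hf.elim (fun hf => hs.yFree hg.1 ha ?_ f hf hY) (fun hf => hp.yFree hg.2 f hf hY)
    simpa [Ty.order] using hσ
end

theorem IsData.yFree {s : Tm α} (h : IsData S s) : YFree S s :=
  h.1.yFree h.2

end Data

section Safety

variable {B : Set (Tm α)}

theorem bSafe_app_iff {a b : Tm α} (h : ¬ ConsHead S (.app a b)) :
    BSafe S B (.app a b) ↔ BSafe S B a ∧ BSafe S B b := by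
  refine ⟨fun hs => ⟨?_, fun u hu => hs u (.strict (.right hu))⟩, fun ⟨ha, hb⟩ => ?_⟩
  · rintro u (_ | hu) hc
    · exact absurd hc h
    · exact hs u (.strict (.left hu)) hc
  · rintro u (_ | hu | hu) hc
    · exact absurd hc h
    · exact ha u (.strict hu) hc
    · exact hb u hu hc

theorem BSafe.yFree (hB : ∀ t ∈ B, IsData S t) {s : Tm α} (hg : s.ground)
    (hs : BSafe S B s) : YFree S s := by
  induction s with
  | sym f =>
    rintro _ rfl hY
    exact (hB _ (hs _ (.refl _) ⟨f, rfl, hY.1⟩)).yFree f rfl hY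
  | var => exact hg.elim
  | app a b iha ihb =>
    by_cases hc : ConsHead S (.app a b)
    · exact (hB _ (hs _ (.refl _) hc)).yFree
    obtain ⟨ha, hb⟩ := (bSafe_app_iff hc).1 hs
    rintro f (hf | hf)
    · exact iha hg.1 ha f hf
    · exact ihb hg.2 hb f hf

end Safety

section Rewriting

variable {R : Set (Rule α)} {B : Set (Tm α)}

theorem LhsSpine.exists_headSym {l : Tm α} : LhsSpine S l → ∃ f, l.headSym = some f ∧ ¬ S.Cons f
  | .head hf => ⟨_, rfl, hf⟩
  | .app hs _ => hs.exists_headSym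

theorem Rew.exists_defined_hasSym (hR : ∀ ρ ∈ R, LhsSpine S ρ.lhs) {s t : Tm α} :
    Rew R s t → ∃ f, ¬ S.Cons f ∧ s.hasSym f
  | .root hρ =>
    have ⟨f, hf, hnc⟩ := (hR _ hρ).exists_headSym
    ⟨f, hnc, Tm.hasSym_of_headSym (Tm.headSym_subst hf)⟩
  | .appL h => have ⟨f, hnc, hf⟩ := h.exists_defined_hasSym hR; ⟨f, hnc, .inl hf⟩
  | .appR h => have ⟨f, hnc, hf⟩ := h.exists_defined_hasSym hR; ⟨f, hnc, .inr hf⟩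

theorem Rew.not_consHead (hR : ∀ ρ ∈ R, LhsSpine S ρ.lhs) (hB : ∀ t ∈ B, IsData S t)
    {s t : Tm α} (h : Rew R s t) (hs : BSafe S B s) : ¬ ConsHead S s := fun hc =>
  have ⟨_, hnc, hf⟩ := h.exists_defined_hasSym hR
  hnc ((hB s (hs s (.refl s) hc)).cons_of_hasSym hf)

theorem mem_rprime_of_yFree_subst_lhs {ρ : Rule α} {γ : ℕ → Tm α} (hρR : ρ ∈ R)
    (hcf : ConsFreeRule S ρ) (hY : YFree S (subst γ ρ.lhs)) : ρ ∈ Rprime S R := by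
  have hl : YFree S ρ.lhs := fun f hf => hY f (Tm.hasSym_subst hf)
  refine ⟨hρR, hl, fun f hf hfY => ?_⟩
  obtain ⟨t, ht, hft⟩ := Tm.exists_subtm_headSym_of_hasSym hf
  rcases hcf t ht ⟨f, hft, hfY.1⟩ with hd | hlt
  · exact hd.yFree f (Tm.hasSym_of_headSym hft) hfY
  · exact hl f (hlt.hasSym (Tm.hasSym_of_headSym hft)) hfY

def SafeTerm (S : Sig α) (B : Set (Tm α)) (σ : Ty) (s : Tm α) : Prop :=
  s.ground ∧ BSafe S B s ∧ HasTy S s σ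

theorem GoodRule.bSafe_subst_rhs {ρ : Rule α} {γ : ℕ → Tm α} {σ : Ty} (hρR : ρ ∈ R)
    (hρ : GoodRule S ρ) (hB : GoodB S R B) (hs : BSafe S B (subst γ ρ.lhs))
    (hty : HasTy S (subst γ ρ.rhs) σ) : BSafe S B (subst γ ρ.rhs) := by
  obtain ⟨hl, -, hvars, -, hcf⟩ := hρ
  have hγ : ∀ {x u}, x ∈ ρ.rhs.vars → Subtm u (γ x) → ConsHead S u → u ∈ B :=
    fun hx hu hc => hs _ (.strict (hl.strSubtm_subst_of_mem_vars (hvars hx) hu)) hc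
  intro u hu hc
  rcases subtm_subst_cases hu with ⟨x, hx, hux⟩ | ⟨r, hr, rfl⟩
  · exact hγ hx hux hc
  obtain ⟨g, hg, hcg⟩ := hc
  rcases r.headSym_or_headVar with ⟨f, hf⟩ | ⟨x, hx⟩
  · rw [Tm.headSym_subst hf, Option.some_inj] at hg
    subst hg
    rcases hcf r hr ⟨f, hf, hcg⟩ with hd | hlt
    · rw [Tm.subst_eq_self_of_ground hd.2]
      exact hB.2.2 ρ hρR r hr hd
    · exact hs _ (.strict hlt.apply_subst) ⟨f, Tm.headSym_subst hf, hcg⟩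
  -- A constructor-headed `γ x` is data, hence of base type, so `x` cannot be applied in `r`.
  rw [Tm.headSym_subst_of_headVar hx] at hg
  have hxB : γ x ∈ B := hγ (hr.vars_subset (Tm.mem_vars_of_headVar hx)) (.refl _) ⟨g, hg, hcg⟩
  obtain ⟨i, hi⟩ := (hB.1 _ hxB).exists_base
  obtain ⟨τ, hτ⟩ := hu.exists_hasTy hty
  rwa [Tm.eq_var_of_headVar_of_base hx hi hτ]

theorem GoodRule.safeTerm_subst_rhs {ρ : Rule α} {γ : ℕ → Tm α} {σ : Ty} (hρR : ρ ∈ R)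
    (hρ : GoodRule S ρ) (hB : GoodB S R B) (h : SafeTerm S B σ (subst γ ρ.lhs)) :
    SafeTerm S B σ (subst γ ρ.rhs) := by
  obtain ⟨hg, hs, hty⟩ := h
  have hty' := hρ.hasTy_subst_rhs hty
  refine ⟨Tm.ground_subst fun x hx => ?_, hρ.bSafe_subst_rhs hρR hB hs hty', hty'⟩
  exact Tm.ground_of_ground_subst hg x (hρ.2.2.1 hx)

theorem Rew.safeTerm (hR : ∀ ρ ∈ R, GoodRule S ρ) (hB : GoodB S R B) {s t : Tm α}
    (h : Rew R s t) {σ : Ty} (hs : SafeTerm S B σ s) :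
    SafeTerm S B σ t ∧ Rew (Rprime S R) s t := by
  have hR' : ∀ ρ ∈ R, LhsSpine S ρ.lhs := fun ρ hρ => (hR ρ hρ).1
  induction h generalizing σ with
  | root hρR =>
    refine ⟨(hR _ hρR).safeTerm_subst_rhs hρR hB hs, .root ?_⟩
    exact mem_rprime_of_yFree_subst_lhs hρR (hR _ hρR).2.2.2.2 (hs.2.1.yFree hB.1 hs.1)
  | @appL a a' b h ih =>
    obtain ⟨hg, hsafe, hty⟩ := hs
    cases hty with | app hta htb => ?_
    have hc : ¬ ConsHead S (.app a b) := (h.appL (t := b)).not_consHead hR' hB.1 hsafe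
    obtain ⟨hsa, hsb⟩ := (bSafe_app_iff hc).1 hsafe
    obtain ⟨⟨hga', hsa', hta'⟩, h'⟩ := ih ⟨hg.1, hsa, hta⟩
    -- A constructor-headed `a'` would be data of base type, but `a'` is applied to `b`.
    have hc' : ¬ ConsHead S (.app a' b) := fun hc' => by
      obtain ⟨i, hi⟩ := (hB.1 _ (hsa' _ (.refl _) hc')).exists_base
      cases hi.unique hta'
    exact ⟨⟨⟨hga', hg.2⟩, (bSafe_app_iff hc').2 ⟨hsa', hsb⟩, .app hta' htb⟩, .appL h'⟩
  | @appR a b b' h ih =>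
    obtain ⟨hg, hsafe, hty⟩ := hs
    cases hty with | app hta htb => ?_
    have hc : ¬ ConsHead S (.app a b) := (h.appR (s := a)).not_consHead hR' hB.1 hsafe
    obtain ⟨hsa, hsb⟩ := (bSafe_app_iff hc).1 hsafe
    obtain ⟨⟨hgb', hsb', htb'⟩, h'⟩ := ih ⟨hg.2, hsb, htb⟩
    exact ⟨⟨⟨hg.1, hgb'⟩, (bSafe_app_iff (b := b') hc).2 ⟨hsa, hsb'⟩, .app hta htb'⟩, .appR h'⟩

theorem safeTerm_of_reflTransGen (hR : ∀ ρ ∈ R, GoodRule S ρ) (hB : GoodB S R B)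
    {s t : Tm α} (h : Relation.ReflTransGen (Rew R) s t) {σ : Ty} (hs : SafeTerm S B σ s) :
    SafeTerm S B σ t ∧ Relation.ReflTransGen (Rew (Rprime S R)) s t := by
  induction h with
  | refl => exact ⟨hs, .refl⟩
  | tail _ hstep ih =>
    obtain ⟨ht, hst⟩ := ih
    obtain ⟨hu, htu⟩ := hstep.safeTerm hR hB ht
    exact ⟨hu, hst.tail htu⟩

end Rewriting

section Basic

variable {R : Set (Rule α)}

theorem goodB_bset (s : Tm α) : GoodB S R (Bset S R s) := by
  refine ⟨fun t ht => ht.1, fun t ht u hu => ⟨ht.1.of_subtm hu, ?_⟩,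
    fun ρ hρ t ht hd => ⟨hd, .inr ⟨ρ, hρ, ht⟩⟩⟩
  rcases ht.2 with h | ⟨ρ, hρ, h⟩
  · exact .inl (hu.trans h)
  · exact .inr ⟨ρ, hρ, hu.trans h⟩

theorem BasicSpine.ground {s : Tm α} : BasicSpine S s → s.ground
  | .head _ => trivial
  | .app hs hd => ⟨hs.ground, hd.2⟩

theorem BasicSpine.isData_of_strSubtm {s u : Tm α} : BasicSpine S s → StrSubtm u s → IsData S u
  | .app hs _, .left hu => hs.isData_of_strSubtm hu
  | .app _ hd, .right hu => hd.of_subtm hu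

theorem BasicSpine.exists_headSym {s : Tm α} :
    BasicSpine S s → ∃ f, s.headSym = some f ∧ ¬ S.Cons f
  | .head hf => ⟨_, rfl, hf⟩
  | .app hs _ => hs.exists_headSym

theorem Basic.safeTerm_bset {s : Tm α} (h : Basic S s) :
    ∃ σ, SafeTerm S (Bset S R s) σ s := by
  obtain ⟨hs, i, hi⟩ := h
  refine ⟨.base i, hs.ground, ?_, hi⟩
  rintro u (_ | hu) hc
  · obtain ⟨f, hf, hnc⟩ := hs.exists_headSym
    obtain ⟨g, hg, hcg⟩ := hc
    cases hf.symm.trans hg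
    exact absurd hcg hnc
  · exact ⟨hs.isData_of_strSubtm hu, .inl (.strict hu)⟩

end Basic

end

/-- Constructors with higher-order argument types can be eliminated:
(a) data terms and (ground) `B`-safe terms lie in `T(F', ∅)`;
(b) reductions from basic terms stay in `T(F', ∅)` and use only rules of `R'`. -/
theorem higher_order_constructors_eliminable {α : Type} (S : Sig α)
    (R : Set (Rule α)) (hR : ∀ ρ ∈ R, GoodRule S ρ) :
    ((∀ s : Tm α, IsData S s → s.ground ∧ YFree S s) ∧
     (∀ B, GoodB S R B → ∀ s : Tm α, s.ground → BSafe S B s → YFree S s)) ∧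
    (∀ s t : Tm α, Basic S s → Relation.ReflTransGen (Rew R) s t →
      (t.ground ∧ YFree S t) ∧ Relation.ReflTransGen (Rew (Rprime S R)) s t) := by
  refine ⟨⟨fun s hs => ⟨hs.2, hs.yFree⟩, fun B hB s hg hs => hs.yFree hB.1 hg⟩, ?_⟩
  intro s t hs hst
  obtain ⟨σ, hsafe⟩ := hs.safeTerm_bset (R := R)
  obtain ⟨⟨hg, ht, -⟩, hst'⟩ := safeTerm_of_reflTransGen hR (goodB_bset s) hst hsafe
  exact ⟨⟨hg, ht.yFree (goodB_bset s).1 hg⟩, hst'⟩
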